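/- arXiv:1910.10883 — 2 statements merged into one kernel-verified Lean document; each statement's English description precedes it below -/
import Mathlib

section
/- Let S, T ⊆ {2, …, n} be subsets with ∑_{i ∈ S} w_i > 1 and ∑_{i ∈ T} w_i > 1, and suppose S ∩ T = ∅. Then the union E_S ∪ E_T is a flat of the graphic matroid M(w), and the subgraph of G(w) with edge set E_S ∪ E_T is disconnected (its vertex set splits into the two nonempty parts S and T with no edges of E_S ∪ E_T between them). -/
open Finset

/-- The reduced weight graph `G(w)`: vertices are `{2, …, n}` (as natural numbers),
and distinct `i, j ∈ {2, …, n}` are adjacent iff `w i + w j > 1`. -/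
def redGraph (n : ℕ) (w : ℕ → ℚ) : SimpleGraph ℕ where
  Adj i j := i ≠ j ∧ (2 ≤ i ∧ i ≤ n) ∧ (2 ≤ j ∧ j ≤ n) ∧ 1 < w i + w j
  symm := by
    constructor
    intro i j h
    exact ⟨h.1.symm, h.2.2.1, h.2.1, by rw [add_comm]; exact h.2.2.2⟩
  loopless := by constructor; intro i h; exact h.1 rfl

/-- `E_S`: the set of edges of `G(w)` with both endpoints in `S`. -/
def edgesIn (n : ℕ) (w : ℕ → ℚ) (S : Set ℕ) : Set (Sym2 ℕ) :=
  {e ∈ (redGraph n w).edgeSet | ∀ v ∈ e, v ∈ S}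

/-- A set `F` of edges of `G(w)` is a *flat* of the graphic matroid `M(w)` if for
every edge `{u, v}` of `G(w)` not in `F`, the vertices `u` and `v` are not joined
by a walk using only edges of `F`. -/
def IsFlat (n : ℕ) (w : ℕ → ℚ) (F : Set (Sym2 ℕ)) : Prop :=
  F ⊆ (redGraph n w).edgeSet ∧
    ∀ u v : ℕ, (redGraph n w).Adj u v → s(u, v) ∉ F →
      ¬ (SimpleGraph.fromEdgeSet F).Reachable u v

/-- The set of endpoints of edges in `F`. -/
def edgeSupport (F : Set (Sym2 ℕ)) : Set ℕ := {v | ∃ e ∈ F, v ∈ e}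

/-- A flat `F` is *1-connected* if the subgraph of `G(w)` with edge set `F` and
vertex set the endpoints of edges of `F` is connected. -/
def OneConnected (F : Set (Sym2 ℕ)) : Prop :=
  ((SimpleGraph.fromEdgeSet F).induce (edgeSupport F)).Connected

/- The union of the edge sets induced on the classes of a vertex partition is a flat. Here the
classes are `S`, `T` and singletons: a walk along edges of `E_S ∪ E_T` never leaves `S`, never
leaves `T`, and cannot start at a vertex outside `S ∪ T`. -/

theorem SimpleGraph.Reachable.mem_of_adj_imp_mem {V : Type*} {G : SimpleGraph V} {s : Set V}
    (hs : ∀ a b, G.Adj a b → a ∈ s → b ∈ s) {u v : V} (h : G.Reachable u v) (hu : u ∈ s) :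
    v ∈ s := by
  obtain ⟨p⟩ := h
  induction p with
  | nil => exact hu
  | cons hab _ ih => exact ih (hs _ _ hab hu)

section edgesIn

variable {n : ℕ} {w : ℕ → ℚ} {S T : Set ℕ}

theorem mem_of_mem_edgesIn {e : Sym2 ℕ} {v : ℕ} (he : e ∈ edgesIn n w S) (hv : v ∈ e) : v ∈ S :=
  he.2 v hv

theorem mk_mem_edgesIn {u v : ℕ} (huv : (redGraph n w).Adj u v) (hu : u ∈ S) (hv : v ∈ S) :
    s(u, v) ∈ edgesIn n w S := by
  refine ⟨huv, fun x hx => ?_⟩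
  rcases Sym2.mem_iff.mp hx with rfl | rfl
  exacts [hu, hv]

theorem edgeSupport_union_edgesIn_subset :
    edgeSupport (edgesIn n w S ∪ edgesIn n w T) ⊆ S ∪ T := by
  rintro v ⟨e, he | he, hv⟩
  exacts [Or.inl (mem_of_mem_edgesIn he hv), Or.inr (mem_of_mem_edgesIn he hv)]

theorem mem_of_mk_mem_union_edgesIn (hST : Disjoint S T) {a b : ℕ}
    (hab : s(a, b) ∈ edgesIn n w S ∪ edgesIn n w T) (ha : a ∈ S) : b ∈ S := by
  rcases hab with hab | hab
  · exact mem_of_mem_edgesIn hab (Sym2.mem_mk_right a b)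
  · exact absurd (mem_of_mem_edgesIn hab (Sym2.mem_mk_left a b)) (hST.notMem_of_mem_left ha)

theorem mk_notMem_union_edgesIn (hST : Disjoint S T) {u v : ℕ} (hu : u ∈ S) (hv : v ∈ T) :
    s(u, v) ∉ edgesIn n w S ∪ edgesIn n w T :=
  fun huv => hST.notMem_of_mem_left (mem_of_mk_mem_union_edgesIn hST huv hu) hv

theorem reachable_union_edgesIn_mem (hST : Disjoint S T) {u v : ℕ}
    (h : (SimpleGraph.fromEdgeSet (edgesIn n w S ∪ edgesIn n w T)).Reachable u v) (hu : u ∈ S) :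
    v ∈ S :=
  h.mem_of_adj_imp_mem (fun _ _ hab => mem_of_mk_mem_union_edgesIn hST
    (SimpleGraph.fromEdgeSet_adj _ |>.mp hab).1) hu

theorem isFlat_union_edgesIn (hST : Disjoint S T) :
    IsFlat n w (edgesIn n w S ∪ edgesIn n w T) := by
  refine ⟨fun e he => he.elim (·.1) (·.1), fun u v huv hnot hreach => ?_⟩
  by_cases huS : u ∈ S
  · exact hnot (Or.inl (mk_mem_edgesIn huv huS (reachable_union_edgesIn_mem hST hreach huS)))
  by_cases huT : u ∈ T
  · rw [Set.union_comm] at hnot hreach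
    exact hnot (Or.inl (mk_mem_edgesIn huv huT (reachable_union_edgesIn_mem hST.symm hreach huT)))
  have hvu : v ∈ ({u} : Set ℕ) := by
    refine hreach.mem_of_adj_imp_mem (fun a b hab (ha : a = u) => ?_) rfl
    subst ha
    exact absurd (edgeSupport_union_edgesIn_subset ⟨_, hab.1, Sym2.mem_mk_left a b⟩)
      (not_or.mpr ⟨huS, huT⟩)
  exact huv.ne hvu.symm

end edgesIn

theorem union_edgesIn_flat_of_disjoint_general (n : ℕ)
    (w : ℕ → ℚ)
    (S T : Finset ℕ)
    (hsS : 1 < ∑ i ∈ S, w i) (hsT : 1 < ∑ i ∈ T, w i) (hdisj : S ∩ T = ∅) :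
    IsFlat n w (edgesIn n w (↑S : Set ℕ) ∪ edgesIn n w (↑T : Set ℕ)) ∧
    (edgeSupport (edgesIn n w (↑S : Set ℕ) ∪ edgesIn n w (↑T : Set ℕ)) ⊆ ↑S ∪ ↑T) ∧
    S.Nonempty ∧ T.Nonempty ∧
    (∀ u ∈ S, ∀ v ∈ T,
      s(u, v) ∉ edgesIn n w (↑S : Set ℕ) ∪ edgesIn n w (↑T : Set ℕ)) := by
  have hST : Disjoint (S : Set ℕ) T :=
    Finset.disjoint_coe.mpr (Finset.disjoint_iff_inter_eq_empty.mpr hdisj)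
  exact ⟨isFlat_union_edgesIn hST, edgeSupport_union_edgesIn_subset,
    nonempty_of_sum_ne_zero (zero_lt_one.trans hsS).ne',
    nonempty_of_sum_ne_zero (zero_lt_one.trans hsT).ne',
    fun u hu v hv => mk_notMem_union_edgesIn hST hu hv⟩

/-- If `S, T ⊆ {2, …, n}` are disjoint with `∑_{i ∈ S} w i > 1` and
`∑_{i ∈ T} w i > 1`, then `E_S ∪ E_T` is a flat of `M(w)`, and the subgraph with
edge set `E_S ∪ E_T` is disconnected: its vertex set splits into the two nonempty
parts `S` and `T` with no edges of `E_S ∪ E_T` between them. -/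
theorem union_edgesIn_flat_of_disjoint (n m : ℕ) (ε : ℚ) (hm : 2 ≤ m) (hmn : m < n) (hn : 4 ≤ n)
    (hε0 : 0 < ε) (hε1 : ε < 1 / ((n : ℚ) - m))
    (w : ℕ → ℚ) (hw : ∀ i, 1 ≤ i → i ≤ n → w i = if i ≤ m then 1 else ε)
    (S T : Finset ℕ) (hS : S ⊆ Finset.Icc 2 n) (hT : T ⊆ Finset.Icc 2 n)
    (hsS : 1 < ∑ i ∈ S, w i) (hsT : 1 < ∑ i ∈ T, w i) (hdisj : S ∩ T = ∅) :
    IsFlat n w (edgesIn n w (↑S : Set ℕ) ∪ edgesIn n w (↑T : Set ℕ)) ∧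
    (edgeSupport (edgesIn n w (↑S : Set ℕ) ∪ edgesIn n w (↑T : Set ℕ)) ⊆ ↑S ∪ ↑T) ∧
    S.Nonempty ∧ T.Nonempty ∧
    (∀ u ∈ S, ∀ v ∈ T,
      s(u, v) ∉ edgesIn n w (↑S : Set ℕ) ∪ edgesIn n w (↑T : Set ℕ)) :=
  union_edgesIn_flat_of_disjoint_general n w S T hsS hsT hdisj
end

section
/- Let S, T ⊆ {2, …, n} be subsets with ∑_{i ∈ S} w_i > 1 and ∑_{i ∈ T} w_i > 1, and suppose S ∩ T ≠ ∅. Then every flat of the graphic matroid M(w) containing E_S ∪ E_T contains E_{S ∪ T}; in other words, the smallest flat containing E_S ∪ E_T is E_{S ∪ T}. -/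
/-!
The light vertices weigh less than `1` in total, so a set of weight `> 1` contains a heavy
vertex, and a heavy vertex is adjacent in `G(w)` to every other vertex. Hence `E_S` contains a
spanning star of `S` centred at a heavy vertex, and likewise for `T`; as `S` and `T` meet, any
edge set containing `E_S ∪ E_T` connects all of `S ∪ T`, so a flat containing it contains
`E_(S ∪ T)`. That `E_A` is itself a flat holds for every `A`: the vertices outside `A` are
isolated in it.
-/

open Finset

open SimpleGraph

theorem SimpleGraph.IsIsolated.eq_of_reachable {V : Type*} {G : SimpleGraph V} {u v : V}
    (hu : G.IsIsolated u) (h : G.Reachable u v) : u = v := by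
  obtain ⟨p⟩ := h
  cases p with
  | nil => rfl
  | cons ha _ => exact absurd ha (hu _)

section EdgesIn

variable {n : ℕ} {w : ℕ → ℚ}

lemma mem_edgesIn {A : Set ℕ} {u v : ℕ} :
    s(u, v) ∈ edgesIn n w A ↔ (redGraph n w).Adj u v ∧ u ∈ A ∧ v ∈ A := by
  simp [edgesIn]

lemma edgesIn_mono {A B : Set ℕ} (h : A ⊆ B) : edgesIn n w A ⊆ edgesIn n w B :=
  fun _ he => ⟨he.1, fun v hv => h (he.2 v hv)⟩

lemma isIsolated_fromEdgeSet_edgesIn {A : Set ℕ} {u : ℕ} (hu : u ∉ A) :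
    (fromEdgeSet (edgesIn n w A)).IsIsolated u := fun _ hv =>
  hu (((fromEdgeSet_adj _).1 hv).1.2 u (Sym2.mem_mk_left _ _))

lemma isFlat_edgesIn (A : Set ℕ) : IsFlat n w (edgesIn n w A) := by
  refine ⟨fun e he => he.1, fun u v huv hnot hr => ?_⟩
  by_cases hu : u ∈ A
  · by_cases hv : v ∈ A
    · exact hnot (mem_edgesIn.2 ⟨huv, hu, hv⟩)
    · exact huv.ne ((isIsolated_fromEdgeSet_edgesIn hv).eq_of_reachable hr.symm).symm
  · exact huv.ne ((isIsolated_fromEdgeSet_edgesIn hu).eq_of_reachable hr)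

lemma IsFlat.edgesIn_subset {F : Set (Sym2 ℕ)} (hF : IsFlat n w F) {A : Set ℕ}
    (hA : ∀ u ∈ A, ∀ v ∈ A, (fromEdgeSet F).Reachable u v) : edgesIn n w A ⊆ F := by
  intro e he
  induction e using Sym2.ind with
  | _ u v =>
    obtain ⟨huv, hu, hv⟩ := mem_edgesIn.1 he
    by_contra hne
    exact hF.2 u v huv hne (hA u hu v hv)

lemma reachable_of_edgesIn_subset {F : Set (Sym2 ℕ)} {U : Set ℕ} (hUF : edgesIn n w U ⊆ F)
    {h : ℕ} (hh : h ∈ U) (hadj : ∀ u ∈ U, u ≠ h → (redGraph n w).Adj u h) {u : ℕ} (hu : u ∈ U) :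
    (fromEdgeSet F).Reachable u h := by
  obtain rfl | hne := eq_or_ne u h
  · rfl
  · exact ((fromEdgeSet_adj _).2 ⟨hUF (mem_edgesIn.2 ⟨hadj u hu hne, hu, hh⟩), hne⟩).reachable

end EdgesIn

section HeavyLight

variable {n m : ℕ} {ε : ℚ} {w : ℕ → ℚ}

lemma redGraph_adj_of_le (hw : ∀ i, 1 ≤ i → i ≤ n → w i = if i ≤ m then 1 else ε)
    (hε0 : 0 < ε) {u h : ℕ} (hu : u ∈ Icc 2 n) (hh : h ∈ Icc 2 n) (hhm : h ≤ m) (hne : u ≠ h) :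
    (redGraph n w).Adj u h := by
  rw [mem_Icc] at hu hh
  have hwu : 0 < w u := by
    rw [hw u (by omega) hu.2]
    split_ifs <;> positivity
  have hwh : w h = 1 := by rw [hw h (by omega) hh.2, if_pos hhm]
  exact ⟨hne, hu, hh, by linarith⟩

lemma sum_lt_one_of_subset_Ioc (hw : ∀ i, 1 ≤ i → i ≤ n → w i = if i ≤ m then 1 else ε)
    (hε0 : 0 < ε) (hε1 : ε < 1 / ((n : ℚ) - m)) (hmn : m < n) {U : Finset ℕ}
    (hU : U ⊆ Ioc m n) : ∑ i ∈ U, w i < 1 := by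
  have hlight : ∀ i ∈ U, w i = ε := fun i hi => by
    obtain ⟨him, hin⟩ := mem_Ioc.1 (hU hi)
    rw [hw i (by omega) hin, if_neg (by omega)]
  have hcard : (#U : ℚ) ≤ (n : ℚ) - m := by
    have := card_le_card hU
    rw [Nat.card_Ioc] at this
    exact_mod_cast (Nat.cast_le.2 this).trans_eq (Nat.cast_sub hmn.le)
  have hnm : (0 : ℚ) < (n : ℚ) - m := sub_pos.2 (by exact_mod_cast hmn)
  calc ∑ i ∈ U, w i = #U * ε := by rw [sum_congr rfl hlight, sum_const, nsmul_eq_mul]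
    _ ≤ ((n : ℚ) - m) * ε := by gcongr
    _ < ((n : ℚ) - m) * (1 / ((n : ℚ) - m)) := by gcongr
    _ = 1 := mul_one_div_cancel hnm.ne'

lemma exists_mem_le_of_one_lt_sum (hw : ∀ i, 1 ≤ i → i ≤ n → w i = if i ≤ m then 1 else ε)
    (hε0 : 0 < ε) (hε1 : ε < 1 / ((n : ℚ) - m)) (hmn : m < n) {U : Finset ℕ}
    (hU : U ⊆ Icc 2 n) (hsum : 1 < ∑ i ∈ U, w i) : ∃ h ∈ U, h ≤ m := by
  by_contra! hlight
  refine (sum_lt_one_of_subset_Ioc hw hε0 hε1 hmn fun i hi => ?_).not_gt hsum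
  exact mem_Ioc.2 ⟨hlight i hi, (mem_Icc.1 (hU hi)).2⟩

end HeavyLight

theorem closure_union_edgesIn_general (n m : ℕ) (ε : ℚ) (hmn : m < n)
    (hε0 : 0 < ε) (hε1 : ε < 1 / ((n : ℚ) - m))
    (w : ℕ → ℚ) (hw : ∀ i, 1 ≤ i → i ≤ n → w i = if i ≤ m then 1 else ε)
    (S T : Finset ℕ) (hS : S ⊆ Finset.Icc 2 n) (hT : T ⊆ Finset.Icc 2 n)
    (hsS : 1 < ∑ i ∈ S, w i) (hsT : 1 < ∑ i ∈ T, w i) (hmeet : (S ∩ T).Nonempty) :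
    IsFlat n w (edgesIn n w (↑(S ∪ T) : Set ℕ)) ∧
    edgesIn n w (↑S : Set ℕ) ∪ edgesIn n w (↑T : Set ℕ) ⊆ edgesIn n w (↑(S ∪ T) : Set ℕ) ∧
    (∀ F : Set (Sym2 ℕ), IsFlat n w F →
      edgesIn n w (↑S : Set ℕ) ∪ edgesIn n w (↑T : Set ℕ) ⊆ F →
      edgesIn n w (↑(S ∪ T) : Set ℕ) ⊆ F) := by
  refine ⟨isFlat_edgesIn _, Set.union_subset (edgesIn_mono (by simp)) (edgesIn_mono (by simp)),
    fun F hF hSTF => hF.edgesIn_subset ?_⟩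
  have reach_heavy : ∀ {U : Finset ℕ}, U ⊆ Icc 2 n → edgesIn n w ↑U ⊆ F →
      ∀ h ∈ U, h ≤ m → ∀ u ∈ U, (fromEdgeSet F).Reachable u h :=
    fun hU hUF h hh hhm u hu => reachable_of_edgesIn_subset hUF hh
      (fun v hv hne => redGraph_adj_of_le hw hε0 (hU hv) (hU hh) hhm hne) hu
  obtain ⟨x, hx⟩ := hmeet
  obtain ⟨hxS, hxT⟩ := mem_inter.1 hx
  obtain ⟨a, haS, ham⟩ := exists_mem_le_of_one_lt_sum hw hε0 hε1 hmn hS hsS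
  obtain ⟨b, hbT, hbm⟩ := exists_mem_le_of_one_lt_sum hw hε0 hε1 hmn hT hsT
  have reachS := reach_heavy hS (fun e he => hSTF (Or.inl he)) a haS ham
  have reachT := reach_heavy hT (fun e he => hSTF (Or.inr he)) b hbT hbm
  have reach_a : ∀ u ∈ S ∪ T, (fromEdgeSet F).Reachable u a := by
    intro u hu
    rcases mem_union.1 hu with hu | hu
    · exact reachS u hu
    · exact ((reachT u hu).trans (reachT x hxT).symm).trans (reachS x hxS)
  intro u hu v hv
  exact (reach_a u (by simpa using hu)).trans (reach_a v (by simpa using hv)).symm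

/-- If `S, T ⊆ {2, …, n}` have `∑_{i ∈ S} w i > 1`,
`∑_{i ∈ T} w i > 1` and `S ∩ T ≠ ∅`, then every flat of `M(w)` containing
`E_S ∪ E_T` contains `E_(S ∪ T)`; in other words, `E_(S ∪ T)` is the smallest flat
containing `E_S ∪ E_T`. -/
theorem closure_union_edgesIn (n m : ℕ) (ε : ℚ) (hm : 2 ≤ m) (hmn : m < n) (hn : 4 ≤ n)
    (hε0 : 0 < ε) (hε1 : ε < 1 / ((n : ℚ) - m))
    (w : ℕ → ℚ) (hw : ∀ i, 1 ≤ i → i ≤ n → w i = if i ≤ m then 1 else ε)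
    (S T : Finset ℕ) (hS : S ⊆ Finset.Icc 2 n) (hT : T ⊆ Finset.Icc 2 n)
    (hsS : 1 < ∑ i ∈ S, w i) (hsT : 1 < ∑ i ∈ T, w i) (hmeet : (S ∩ T).Nonempty) :
    IsFlat n w (edgesIn n w (↑(S ∪ T) : Set ℕ)) ∧
    edgesIn n w (↑S : Set ℕ) ∪ edgesIn n w (↑T : Set ℕ) ⊆ edgesIn n w (↑(S ∪ T) : Set ℕ) ∧
    (∀ F : Set (Sym2 ℕ), IsFlat n w F →
      edgesIn n w (↑S : Set ℕ) ∪ edgesIn n w (↑T : Set ℕ) ⊆ F →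
      edgesIn n w (↑(S ∪ T) : Set ℕ) ⊆ F) :=
  closure_union_edgesIn_general n m ε hmn hε0 hε1 w hw S T hS hT hsS hsT hmeet
end
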